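/- arXiv:2011.14865 — 4 statements merged into one kernel-verified Lean document; each statement's English description precedes it below -/
import Mathlib

section
/- Let p ≥ 1, let β̃ ∈ ℝ^p, and let I be a symmetric positive definite p×p real matrix. For λ ≥ 0 define b̂(λ) = −λ (I + λ·Id)⁻¹ β̃, v̂(λ) = (I + λ·Id)⁻¹ I (I + λ·Id)⁻¹ and m̂(λ) = v̂(λ) + b̂(λ) b̂(λ)ᵀ. Then for every nonzero positive semidefinite p×p real matrix B and every λ > 0 with λ · (β̃ᵀβ̃) < 2, one has trace(B m̂(λ)) < trace(B m̂(0)); consequently the function λ ↦ trace(B m̂(λ)) is not minimized at λ = 0 and attains values strictly smaller than its value at 0 at some λ > 0. -/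
open Matrix

/-- Asymptotic bias of the ridge estimator at penalty `l`, with plug-in `β`. -/
noncomputable def ridgeBias {p : ℕ} (I : Matrix (Fin p) (Fin p) ℝ) (β : Fin p → ℝ)
    (l : ℝ) : Fin p → ℝ :=
  (-l) • ((I + l • (1 : Matrix (Fin p) (Fin p) ℝ))⁻¹ *ᵥ β)

/-- Asymptotic variance of the ridge estimator at penalty `l`. -/
noncomputable def ridgeVar {p : ℕ} (I : Matrix (Fin p) (Fin p) ℝ) (l : ℝ) :
    Matrix (Fin p) (Fin p) ℝ :=
  (I + l • (1 : Matrix (Fin p) (Fin p) ℝ))⁻¹ * I *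
    (I + l • (1 : Matrix (Fin p) (Fin p) ℝ))⁻¹

/-- Estimated second-order moment matrix `m̂(λ) = v̂(λ) + b̂(λ) b̂(λ)ᵀ`. -/
noncomputable def ridgeMoment {p : ℕ} (I : Matrix (Fin p) (Fin p) ℝ) (β : Fin p → ℝ)
    (l : ℝ) : Matrix (Fin p) (Fin p) ℝ :=
  ridgeVar I l + vecMulVec (ridgeBias I β l) (ridgeBias I β l)


/-! With `N = I + λ • 1` we have `m̂(0) = I⁻¹` and `I⁻¹ - m̂(λ) = N⁻¹ E N⁻¹`, where
`E = N I⁻¹ N - I - λ² β̃ β̃ᵀ = 2λ • 1 - λ² β̃ β̃ᵀ + λ² I⁻¹`. By Cauchy–Schwarz,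
`xᵀ (2λ • 1 - λ² β̃ β̃ᵀ) x ≥ λ (2 - λ β̃ᵀβ̃) ‖x‖²`, so `E` and hence `I⁻¹ - m̂(λ)` are positive
definite when `λ β̃ᵀβ̃ < 2`. Finally `trace (B D) > 0` for `B ⪰ 0` nonzero and `D ≻ 0`, since
writing `D = Rᴴ R` turns it into the trace of the nonzero positive semidefinite `R B Rᴴ`. -/

namespace Matrix

section Trace

open scoped ComplexOrder MatrixOrder

variable {n 𝕜 : Type*} [Fintype n] [RCLike 𝕜]

theorem trace_mul_pos_of_posSemidef_of_posDef {B D : Matrix n n 𝕜} (hB : B.PosSemidef)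
    (hB0 : B ≠ 0) (hD : D.PosDef) : 0 < (B * D).trace := by
  classical
  obtain ⟨R, rfl⟩ := CStarAlgebra.nonneg_iff_eq_star_mul_self.mp hD.posSemidef.nonneg
  have hR : IsUnit R := isUnit_of_mul_isUnit_right hD.isUnit
  have hC : (R * B * Rᴴ).PosSemidef := hB.mul_mul_conjTranspose_same R
  have hC0 : R * B * Rᴴ ≠ 0 := by
    rwa [ne_eq, ← star_eq_conjTranspose, hR.star.mul_left_eq_zero, hR.mul_right_eq_zero]
  have htrace : (B * (star R * R)).trace = (R * B * Rᴴ).trace := by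
    rw [← mul_assoc, trace_mul_comm, ← mul_assoc, star_eq_conjTranspose]
  rw [htrace]
  exact hC.trace_nonneg.lt_of_ne (Ne.symm (hC.trace_eq_zero_iff.not.mpr hC0))

end Trace

variable {n : Type*} [Fintype n] [DecidableEq n]

theorem posDef_smul_one_sub_smul_vecMulVec {s t : ℝ} (β : n → ℝ) (hs : 0 ≤ s)
    (h : s * (β ⬝ᵥ β) < t) : (t • (1 : Matrix n n ℝ) - s • vecMulVec β β).PosDef := by
  refine .of_dotProduct_mulVec_pos ?_ fun x hx => ?_
  · simp [IsHermitian]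
  have hx2 : 0 < x ⬝ᵥ x := by simpa using dotProduct_star_self_pos_iff.mpr hx
  have cauchySchwarz : (β ⬝ᵥ x) ^ 2 ≤ (β ⬝ᵥ β) * (x ⬝ᵥ x) := by
    simpa [dotProduct, sq] using Finset.sum_mul_sq_le_sq_mul_sq Finset.univ β x
  have hquad : star x ⬝ᵥ ((t • 1 - s • vecMulVec β β) *ᵥ x) =
      t * (x ⬝ᵥ x) - s * (β ⬝ᵥ x) ^ 2 := by
    simp [sub_mulVec, smul_mulVec, vecMulVec_mulVec, dotProduct_comm x β, sq]
  rw [hquad]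
  nlinarith [mul_le_mul_of_nonneg_left cauchySchwarz hs]

end Matrix

section Ridge

variable {p : ℕ} (I : Matrix (Fin p) (Fin p) ℝ) (β : Fin p → ℝ)

theorem ridgeMoment_zero (hI : IsUnit I) : ridgeMoment I β 0 = I⁻¹ := by
  have hIdet : IsUnit I.det := (isUnit_iff_isUnit_det I).mp hI
  simp [ridgeMoment, ridgeVar, ridgeBias, nonsing_inv_mul I hIdet]

theorem ridgeMoment_eq (hI : I.IsHermitian) (l : ℝ) :
    ridgeMoment I β l =
      (I + l • 1)⁻¹ * (I + l ^ 2 • vecMulVec β β) * (I + l • 1)⁻¹ := by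
  set N := I + l • (1 : Matrix (Fin p) (Fin p) ℝ)
  have hNT : (N⁻¹)ᵀ = N⁻¹ := by
    rw [← conjTranspose_eq_transpose_of_trivial]
    exact (hI.add (isHermitian_one.smul (IsSelfAdjoint.all l))).inv.eq
  have hbias : vecMulVec (ridgeBias I β l) (ridgeBias I β l) =
      l ^ 2 • (N⁻¹ * vecMulVec β β * N⁻¹) := by
    rw [ridgeBias, smul_vecMulVec, vecMulVec_smul, smul_smul, mul_vecMulVec, vecMulVec_mul,
      ← hNT, vecMul_transpose, hNT, neg_mul_neg, sq]
  rw [ridgeMoment, ridgeVar, hbias, mul_add, add_mul, Matrix.mul_smul, Matrix.smul_mul]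

theorem inv_sub_ridgeMoment (hI : I.IsHermitian) (hIu : IsUnit I) {l : ℝ}
    (hN : IsUnit (I + l • 1)) :
    I⁻¹ - ridgeMoment I β l =
      (I + l • 1)⁻¹ * ((2 * l) • 1 - l ^ 2 • vecMulVec β β + l ^ 2 • I⁻¹) * (I + l • 1)⁻¹ := by
  set N := I + l • (1 : Matrix (Fin p) (Fin p) ℝ)
  have hNdet : IsUnit N.det := (isUnit_iff_isUnit_det N).mp hN
  have hIdet : IsUnit I.det := (isUnit_iff_isUnit_det I).mp hIu
  have hcancel : N⁻¹ * (N * I⁻¹ * N) * N⁻¹ = I⁻¹ := by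
    rw [← mul_assoc, ← mul_assoc, nonsing_inv_mul N hNdet, one_mul, mul_assoc,
      mul_nonsing_inv N hNdet, mul_one]
  have hexpand : N * I⁻¹ * N = I + (2 * l) • 1 + l ^ 2 • I⁻¹ := by
    simp only [N, add_mul, mul_add, Matrix.smul_mul, Matrix.mul_smul, mul_nonsing_inv I hIdet,
      nonsing_inv_mul I hIdet, one_mul, mul_one, smul_smul]
    module
  calc I⁻¹ - ridgeMoment I β l
      = N⁻¹ * (N * I⁻¹ * N) * N⁻¹ - N⁻¹ * (I + l ^ 2 • vecMulVec β β) * N⁻¹ := by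
        rw [ridgeMoment_eq I β hI, hcancel]
    _ = N⁻¹ * (N * I⁻¹ * N - (I + l ^ 2 • vecMulVec β β)) * N⁻¹ := by
        rw [Matrix.mul_sub, Matrix.sub_mul]
    _ = N⁻¹ * ((2 * l) • 1 - l ^ 2 • vecMulVec β β + l ^ 2 • I⁻¹) * N⁻¹ := by
        rw [hexpand]
        abel_nf

theorem trace_mul_ridgeMoment_lt (hI : I.PosDef)
    {B : Matrix (Fin p) (Fin p) ℝ} (hB : B.PosSemidef) (hB0 : B ≠ 0) {l : ℝ} (hl : 0 < l)
    (hlβ : l * (β ⬝ᵥ β) < 2) :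
    (B * ridgeMoment I β l).trace < (B * ridgeMoment I β 0).trace := by
  have hN : (I + l • 1).PosDef := hI.add_posSemidef (PosSemidef.one.smul hl.le)
  have hE : ((2 * l) • 1 - l ^ 2 • vecMulVec β β + l ^ 2 • I⁻¹).PosDef := by
    refine (posDef_smul_one_sub_smul_vecMulVec β (sq_nonneg l) ?_).add_posSemidef
      (hI.inv.posSemidef.smul (sq_nonneg l))
    nlinarith
  have hconj : ((I + l • 1)⁻¹ * ((2 * l) • 1 - l ^ 2 • vecMulVec β β + l ^ 2 • I⁻¹) *
      (I + l • 1)⁻¹).PosDef := by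
    have := hE.conjTranspose_mul_mul_same (mulVec_injective_of_isUnit hN.inv.isUnit)
    rwa [hN.inv.isHermitian.eq] at this
  have hgap := trace_mul_pos_of_posSemidef_of_posDef hB hB0 hconj
  rw [← inv_sub_ridgeMoment I β hI.isHermitian hI.isUnit hN.isUnit, Matrix.mul_sub,
    trace_sub] at hgap
  rw [ridgeMoment_zero I β hI.isUnit]
  linarith

end Ridge

theorem stmt1_general (p : ℕ) (β : Fin p → ℝ) (I : Matrix (Fin p) (Fin p) ℝ)
    (hI : I.PosDef) (B : Matrix (Fin p) (Fin p) ℝ) (hB : B.PosSemidef) (hB0 : B ≠ 0) :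
    (∀ l : ℝ, 0 < l → l * (β ⬝ᵥ β) < 2 →
      (B * ridgeMoment I β l).trace < (B * ridgeMoment I β 0).trace) ∧
    ¬ (∀ l : ℝ, 0 ≤ l →
        (B * ridgeMoment I β 0).trace ≤ (B * ridgeMoment I β l).trace) ∧
    ∃ l : ℝ, 0 < l ∧
      (B * ridgeMoment I β l).trace < (B * ridgeMoment I β 0).trace := by
  have improves (l : ℝ) (hl : 0 < l) (hlβ : l * (β ⬝ᵥ β) < 2) :=
    trace_mul_ridgeMoment_lt I β hI hB hB0 hl hlβ
  have hββ : 0 ≤ β ⬝ᵥ β := by simpa using dotProduct_star_self_nonneg β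
  obtain ⟨l, hl, hlt⟩ : ∃ l : ℝ, 0 < l ∧
      (B * ridgeMoment I β l).trace < (B * ridgeMoment I β 0).trace := by
    refine ⟨(β ⬝ᵥ β + 1)⁻¹, by positivity, improves _ (by positivity) ?_⟩
    rw [inv_mul_lt_iff₀ (by positivity)]
    linarith
  exact ⟨improves, fun hmin => (hmin l hl.le).not_gt hlt, l, hl, hlt⟩

/-- For every nonzero PSD matrix `B` and every `λ > 0` with `λ · β̃ᵀβ̃ < 2` we have
`trace(B m̂(λ)) < trace(B m̂(0))`; consequently `λ ↦ trace(B m̂(λ))` is not minimized at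
`λ = 0` and attains values strictly smaller than its value at `0` at some `λ > 0`. -/
theorem stmt1 (p : ℕ) (hp : 1 ≤ p) (β : Fin p → ℝ) (I : Matrix (Fin p) (Fin p) ℝ)
    (hI : I.PosDef) (B : Matrix (Fin p) (Fin p) ℝ) (hB : B.PosSemidef) (hB0 : B ≠ 0) :
    (∀ l : ℝ, 0 < l → l * (β ⬝ᵥ β) < 2 →
      (B * ridgeMoment I β l).trace < (B * ridgeMoment I β 0).trace) ∧
    ¬ (∀ l : ℝ, 0 ≤ l →
        (B * ridgeMoment I β 0).trace ≤ (B * ridgeMoment I β l).trace) ∧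
    ∃ l : ℝ, 0 < l ∧
      (B * ridgeMoment I β l).trace < (B * ridgeMoment I β 0).trace :=
  stmt1_general p β I hI B hB hB0
end

section
/- If a_{k0} > 1, a_{k1} > 1 and (a_{k0} − a_{k1})² − a_{k•} ≤ 0 for all k = 1,…,K, then the LOOCV deviance D is strictly decreasing on [0, ∞): for all 0 ≤ λ₁ < λ₂ one has D(λ₂) < D(λ₁); hence its infimum is approached only as λ → ∞ and is not attained at any finite λ. -/
/-!
Since `1 - π̂_{k0}(λ) = (a_{k0} - 1 + 2λ) / (a_{k•} - 1 + 4λ)`, the `k`-th summand of `D` is `-2 f(λ)`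
with `f(λ) = a₀ log (a₀ - 1 + 2λ) + a₁ log (a₁ - 1 + 2λ) - (a₀ + a₁) log (a₀ + a₁ - 1 + 4λ)`.
Over the common denominator, `f'(λ)` has the numerator
`2 (a₀ (a₀ - 1) + a₁ (a₁ - 1)) + 4λ (a₀ + a₁ - (a₀ - a₁)²)`: its constant term is positive because
`a₀, a₁ > 1`, and the hypothesis `(a₀ - a₁)² ≤ a₀ + a₁` makes its slope nonnegative. So every `f` is
strictly increasing on `[0, ∞)` and `D` is strictly decreasing there.
-/

/-- Leave-one-out cross-validated deviance for a saturated model with `K` categories,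
counts `a0 k` (nonevents) and `a1 k` (events), and ridge penalty parameter `l`.
Summands whose count coefficient is zero vanish (in Lean, `0 * log _ = 0`). -/
noncomputable def loocvDev (K : ℕ) (a0 a1 : Fin K → ℕ) (l : ℝ) : ℝ :=
  -2 * ∑ k : Fin K,
    ((a0 k : ℝ) *
        Real.log (1 - ((a1 k : ℝ) + 2 * l) / ((a0 k : ℝ) + (a1 k : ℝ) - 1 + 4 * l)) +
     (a1 k : ℝ) *
        Real.log (((a1 k : ℝ) - 1 + 2 * l) / ((a0 k : ℝ) + (a1 k : ℝ) - 1 + 4 * l)))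

open Real Set

noncomputable def looLogLik (b0 b1 l : ℝ) : ℝ :=
  b0 * log (b0 - 1 + 2 * l) + b1 * log (b1 - 1 + 2 * l) - (b0 + b1) * log (b0 + b1 - 1 + 4 * l)

section LooLogLik

variable {b0 b1 l : ℝ}

theorem looLogLik_eq (hb0 : 1 < b0) (hb1 : 1 < b1) (hl : 0 ≤ l) :
    b0 * log (1 - (b1 + 2 * l) / (b0 + b1 - 1 + 4 * l)) +
      b1 * log ((b1 - 1 + 2 * l) / (b0 + b1 - 1 + 4 * l)) = looLogLik b0 b1 l := by
  have hw : 0 < b0 + b1 - 1 + 4 * l := by linarith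
  have hcompl : 1 - (b1 + 2 * l) / (b0 + b1 - 1 + 4 * l) =
      (b0 - 1 + 2 * l) / (b0 + b1 - 1 + 4 * l) := by
    rw [eq_div_iff hw.ne', sub_mul, div_mul_cancel₀ _ hw.ne']
    ring
  rw [hcompl, log_div (by linarith) hw.ne', log_div (by linarith) hw.ne', looLogLik]
  ring

theorem hasDerivAt_looLogLik (hb0 : 1 < b0) (hb1 : 1 < b1) (hl : 0 ≤ l) :
    HasDerivAt (looLogLik b0 b1)
      (b0 * (2 / (b0 - 1 + 2 * l)) + b1 * (2 / (b1 - 1 + 2 * l)) -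
        (b0 + b1) * (4 / (b0 + b1 - 1 + 4 * l))) l := by
  have affine (c m : ℝ) : HasDerivAt (fun x : ℝ => c + m * x) m l := by
    simpa using ((hasDerivAt_id l).const_mul m).const_add c
  exact ((((affine (b0 - 1) 2).log (by linarith)).const_mul b0).add
    (((affine (b1 - 1) 2).log (by linarith)).const_mul b1)).sub
    (((affine (b0 + b1 - 1) 4).log (by linarith)).const_mul (b0 + b1))

theorem looLogLik_deriv_eq (hb0 : 1 < b0) (hb1 : 1 < b1) (hl : 0 ≤ l) :
    b0 * (2 / (b0 - 1 + 2 * l)) + b1 * (2 / (b1 - 1 + 2 * l)) -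
        (b0 + b1) * (4 / (b0 + b1 - 1 + 4 * l)) =
      (2 * (b0 * (b0 - 1) + b1 * (b1 - 1)) + 4 * l * (b0 + b1 - (b0 - b1) ^ 2)) /
        ((b0 - 1 + 2 * l) * (b1 - 1 + 2 * l) * (b0 + b1 - 1 + 4 * l)) := by
  have hu : b0 - 1 + 2 * l ≠ 0 := by linarith
  have hv : b1 - 1 + 2 * l ≠ 0 := by linarith
  have hw : b0 + b1 - 1 + 4 * l ≠ 0 := by linarith
  rw [mul_div_assoc', mul_div_assoc', mul_div_assoc', div_add_div _ _ hu hv,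
    div_sub_div _ _ (mul_ne_zero hu hv) hw, div_eq_div_iff (by positivity) (by positivity)]
  ring

theorem strictMonoOn_looLogLik (hb0 : 1 < b0) (hb1 : 1 < b1) (hq : (b0 - b1) ^ 2 ≤ b0 + b1) :
    StrictMonoOn (looLogLik b0 b1) (Ici 0) := by
  refine strictMonoOn_of_deriv_pos (convex_Ici 0)
    (fun l hl => (hasDerivAt_looLogLik hb0 hb1 hl).continuousAt.continuousWithinAt) ?_
  intro l hl
  rw [interior_Ici, mem_Ioi] at hl
  rw [(hasDerivAt_looLogLik hb0 hb1 hl.le).deriv, looLogLik_deriv_eq hb0 hb1 hl.le]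
  have hu : 0 < b0 - 1 + 2 * l := by linarith [hl.le]
  have hv : 0 < b1 - 1 + 2 * l := by linarith [hl.le]
  have hw : 0 < b0 + b1 - 1 + 4 * l := by linarith [hl.le]
  have hconst : 0 < b0 * (b0 - 1) + b1 * (b1 - 1) := by nlinarith
  have hslope : 0 ≤ 4 * l * (b0 + b1 - (b0 - b1) ^ 2) :=
    mul_nonneg (by positivity) (by linarith)
  positivity

end LooLogLik

theorem loocvDev_eq_sum {K : ℕ} {a0 a1 : Fin K → ℕ} (ha0 : ∀ k, 1 < a0 k) (ha1 : ∀ k, 1 < a1 k)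
    {l : ℝ} (hl : 0 ≤ l) :
    loocvDev K a0 a1 l = -2 * ∑ k, looLogLik (a0 k) (a1 k) l := by
  unfold loocvDev
  congr 1
  exact Finset.sum_congr rfl fun k _ =>
    looLogLik_eq (by exact_mod_cast ha0 k) (by exact_mod_cast ha1 k) hl

theorem loocvDev_strictAntiOn {K : ℕ} [NeZero K] {a0 a1 : Fin K → ℕ} (ha0 : ∀ k, 1 < a0 k)
    (ha1 : ∀ k, 1 < a1 k) (hq : ∀ k, ((a0 k : ℝ) - a1 k) ^ 2 ≤ a0 k + a1 k) :
    StrictAntiOn (loocvDev K a0 a1) (Ici 0) := by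
  intro l1 hl1 l2 hl2 hlt
  rw [loocvDev_eq_sum ha0 ha1 hl1, loocvDev_eq_sum ha0 ha1 hl2]
  have hsum : ∑ k, looLogLik (a0 k) (a1 k) l1 < ∑ k, looLogLik (a0 k) (a1 k) l2 :=
    Finset.sum_lt_sum_of_nonempty Finset.univ_nonempty fun k _ =>
      strictMonoOn_looLogLik (by exact_mod_cast ha0 k) (by exact_mod_cast ha1 k) (hq k)
        hl1 hl2 hlt
  linarith

/-- If `a_{k0}, a_{k1} > 1` and `(a_{k0} − a_{k1})² − a_{k•} ≤ 0` for all `k`, the LOOCV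
deviance is strictly decreasing on `[0, ∞)`; hence its infimum is not attained at any
finite `λ`. -/
theorem stmt4 (K : ℕ) (hK : 1 ≤ K) (a0 a1 : Fin K → ℕ)
    (h : ∀ k, 1 < a0 k ∧ 1 < a1 k ∧
      ((a0 k : ℝ) - (a1 k : ℝ)) ^ 2 - ((a0 k : ℝ) + (a1 k : ℝ)) ≤ 0) :
    (∀ l1 l2 : ℝ, 0 ≤ l1 → l1 < l2 →
      loocvDev K a0 a1 l2 < loocvDev K a0 a1 l1) ∧
    ¬ ∃ l : ℝ, 0 ≤ l ∧ ∀ l' : ℝ, 0 ≤ l' →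
      loocvDev K a0 a1 l ≤ loocvDev K a0 a1 l' := by
  have : NeZero K := ⟨by omega⟩
  have hanti := loocvDev_strictAntiOn (fun k => (h k).1) (fun k => (h k).2.1)
    (fun k => by linarith [(h k).2.2])
  refine ⟨fun l1 l2 hl1 hlt => hanti hl1 (hl1.trans hlt.le) hlt, ?_⟩
  rintro ⟨l, hl, hmin⟩
  have hlt := hanti hl (by linarith : (0 : ℝ) ≤ l + 1) (lt_add_one l)
  exact hlt.not_ge (hmin (l + 1) (by linarith))
end

section
/- Let S = {1,…,K}, let A be the set of indices k with min(a_{k0}, a_{k1}) = 0 and max(a_{k0}, a_{k1}) = a_{k•} > 1, and let B be the set of indices k with a_{k0} > 1 and a_{k1} > 1; assume A ∪ B = S (quasi-complete separation). If Σ_{k∈B} (a_{k0}² + a_{k1}² − a_{k•}) / ( (a_{k1} − 1)(a_{k0} − 1)(a_{k•} − 1) ) > Σ_{k∈A} a_{k•} / (a_{k•} − 1), then there exists δ > 0 such that D(λ) < D(0) for all λ ∈ (0, δ); in particular the LOOCV deviance is not minimized at λ = 0. -/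
open Set Topology

lemma HasDerivWithinAt.eventually_nhdsGT_lt_of_neg {f : ℝ → ℝ} {f' x : ℝ}
    (hf : HasDerivWithinAt f f' (Ioi x) x) (hf' : f' < 0) : ∀ᶠ y in 𝓝[>] x, f y < f x := by
  have hslope := (hasDerivWithinAt_iff_tendsto_slope' (lt_irrefl x)).mp hf
  filter_upwards [hslope.eventually_lt_const hf', self_mem_nhdsWithin] with y hy hxy
  exact (slope_neg_iff_of_le (le_of_lt hxy)).mp hy

noncomputable def cellLogLik (b0 b1 l : ℝ) : ℝ :=
  b0 * Real.log (1 - (b1 + 2 * l) / (b0 + b1 - 1 + 4 * l)) +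
    b1 * Real.log ((b1 - 1 + 2 * l) / (b0 + b1 - 1 + 4 * l))

noncomputable def cellSlope (b0 b1 : ℝ) : ℝ :=
  (b0 ^ 2 + b1 ^ 2 - (b0 + b1)) / ((b1 - 1) * (b0 - 1) * (b0 + b1 - 1))

lemma loocvDev_eq_sum_cellLogLik (K : ℕ) (a0 a1 : Fin K → ℕ) :
    loocvDev K a0 a1 = fun l => -2 * ∑ k, cellLogLik (a0 k) (a1 k) l :=
  rfl

lemma hasDerivAt_cellLogLik_zero {b0 b1 : ℝ} (h0 : b0 ≠ 1) (h1 : b1 ≠ 1)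
    (hs : b0 + b1 ≠ 1) :
    HasDerivAt (cellLogLik b0 b1) (2 * cellSlope b0 b1) 0 := by
  have h0' : b0 - 1 ≠ 0 := sub_ne_zero.mpr h0
  have h1' : b1 - 1 ≠ 0 := sub_ne_zero.mpr h1
  have hs' : b0 + b1 - 1 ≠ 0 := sub_ne_zero.mpr hs
  have affine (c m : ℝ) : HasDerivAt (fun l : ℝ => c + m * l) m 0 := by
    simpa using ((hasDerivAt_id (0 : ℝ)).const_mul m).const_add c
  have hD : b0 + b1 - 1 + 4 * (0 : ℝ) ≠ 0 := by simpa using hs'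
  have hfail0 : 1 - (b1 + 2 * 0) / (b0 + b1 - 1 + 4 * 0) = (b0 - 1) / (b0 + b1 - 1) := by
    rw [mul_zero, add_zero, mul_zero, add_zero, one_sub_div hs']
    ring
  have hfail := ((hasDerivAt_const (0 : ℝ) (1 : ℝ)).fun_sub
    ((affine b1 2).fun_div (affine _ 4) hD)).log (by rw [hfail0]; exact div_ne_zero h0' hs')
  rw [hfail0] at hfail
  have hsucc := ((affine (b1 - 1) 2).fun_div (affine _ 4) hD).log (by simp [h1', hs'])
  refine ((hfail.const_mul b0).add (hsucc.const_mul b1)).congr_deriv ?_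
  simp only [cellSlope, mul_zero, add_zero, zero_sub]
  field_simp
  ring

lemma cellSlope_of_separated {b0 b1 : ℝ} (hsep : b0 = 0 ∨ b1 = 0) (hs : b0 + b1 ≠ 1) :
    cellSlope b0 b1 = -((b0 + b1) / (b0 + b1 - 1)) := by
  have hs' : b0 + b1 - 1 ≠ 0 := sub_ne_zero.mpr hs
  rcases hsep with rfl | rfl <;> simp only [cellSlope, zero_add, add_zero] at hs' ⊢ <;>
    field_simp <;> ring

lemma hasDerivAt_loocvDev_zero (K : ℕ) (a0 a1 : Fin K → ℕ) (h0 : ∀ k, a0 k ≠ 1)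
    (h1 : ∀ k, a1 k ≠ 1) (hs : ∀ k, a0 k + a1 k ≠ 1) :
    HasDerivAt (loocvDev K a0 a1) (-4 * ∑ k, cellSlope (a0 k) (a1 k)) 0 := by
  have hcells := HasDerivAt.fun_sum (u := Finset.univ) fun k _ =>
    hasDerivAt_cellLogLik_zero (b0 := a0 k) (b1 := a1 k) (by exact_mod_cast h0 k)
      (by exact_mod_cast h1 k) (by exact_mod_cast hs k)
  rw [loocvDev_eq_sum_cellLogLik]
  refine (hcells.const_mul (-2)).congr_deriv ?_
  rw [← Finset.mul_sum]
  ring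

theorem stmt7_general (K : ℕ) (a0 a1 : Fin K → ℕ) (A B : Finset (Fin K))
    (hA : ∀ k, k ∈ A ↔ (min (a0 k) (a1 k) = 0 ∧
      max (a0 k) (a1 k) = a0 k + a1 k ∧ 1 < a0 k + a1 k))
    (hB : ∀ k, k ∈ B ↔ (1 < a0 k ∧ 1 < a1 k))
    (hcover : A ∪ B = Finset.univ)
    (hsum : ∑ k ∈ A, ((a0 k : ℝ) + (a1 k : ℝ)) / ((a0 k : ℝ) + (a1 k : ℝ) - 1) <
            ∑ k ∈ B, ((a0 k : ℝ) ^ 2 + (a1 k : ℝ) ^ 2 - ((a0 k : ℝ) + (a1 k : ℝ))) /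
              (((a1 k : ℝ) - 1) * ((a0 k : ℝ) - 1) * ((a0 k : ℝ) + (a1 k : ℝ) - 1))) :
    (∃ δ : ℝ, 0 < δ ∧ ∀ l : ℝ, 0 < l → l < δ →
      loocvDev K a0 a1 l < loocvDev K a0 a1 0) ∧
    ¬ (∀ l : ℝ, 0 ≤ l → loocvDev K a0 a1 0 ≤ loocvDev K a0 a1 l) := by
  have hcell : ∀ k, a0 k ≠ 1 ∧ a1 k ≠ 1 ∧ a0 k + a1 k ≠ 1 := by
    intro k
    rcases Finset.mem_union.mp (hcover ▸ Finset.mem_univ k) with hk | hk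
    · have := (hA k).mp hk; omega
    · have := (hB k).mp hk; omega
  have hdisj : Disjoint A B := Finset.disjoint_left.mpr fun k hkA hkB => by
    have := (hA k).mp hkA; have := (hB k).mp hkB; omega
  have hsep : ∑ k ∈ A, cellSlope (a0 k) (a1 k) =
      -∑ k ∈ A, ((a0 k : ℝ) + (a1 k : ℝ)) / ((a0 k : ℝ) + (a1 k : ℝ) - 1) := by
    rw [← Finset.sum_neg_distrib]
    refine Finset.sum_congr rfl fun k hk =>
      cellSlope_of_separated ?_ (by exact_mod_cast (hcell k).2.2)
    rcases Nat.min_eq_zero_iff.mp ((hA k).mp hk).1 with h | h <;> simp [h]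
  have hpos : 0 < ∑ k, cellSlope (a0 k) (a1 k) := by
    rw [← hcover, Finset.sum_union hdisj, hsep, neg_add_eq_sub]
    exact sub_pos.mpr hsum
  have hdecr := (hasDerivAt_loocvDev_zero K a0 a1 (fun k => (hcell k).1) (fun k => (hcell k).2.1)
    (fun k => (hcell k).2.2)).hasDerivWithinAt.eventually_nhdsGT_lt_of_neg (by linarith)
  obtain ⟨δ, hδ : 0 < δ, hIoo⟩ := mem_nhdsGT_iff_exists_Ioo_subset.mp hdecr
  have hbelow : ∀ l : ℝ, 0 < l → l < δ → loocvDev K a0 a1 l < loocvDev K a0 a1 0 :=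
    fun l hl hlδ => hIoo ⟨hl, hlδ⟩
  refine ⟨⟨δ, hδ, hbelow⟩, fun hmin => ?_⟩
  exact (hmin (δ / 2) (by positivity)).not_gt (hbelow _ (by positivity) (by linarith))

/-- Quasi-complete separation: with `A` the set of separated categories and `B` the set of
categories with both counts `> 1`, `A ∪ B = S`, if the stated sum inequality holds then
the LOOCV deviance is strictly below `D(0)` on a right-neighborhood of `0`; in particular
it is not minimized at `λ = 0`. -/
theorem stmt7 (K : ℕ) (hK : 1 ≤ K) (a0 a1 : Fin K → ℕ) (A B : Finset (Fin K))
    (hA : ∀ k, k ∈ A ↔ (min (a0 k) (a1 k) = 0 ∧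
      max (a0 k) (a1 k) = a0 k + a1 k ∧ 1 < a0 k + a1 k))
    (hB : ∀ k, k ∈ B ↔ (1 < a0 k ∧ 1 < a1 k))
    (hcover : A ∪ B = Finset.univ)
    (hsum : ∑ k ∈ A, ((a0 k : ℝ) + (a1 k : ℝ)) / ((a0 k : ℝ) + (a1 k : ℝ) - 1) <
            ∑ k ∈ B, ((a0 k : ℝ) ^ 2 + (a1 k : ℝ) ^ 2 - ((a0 k : ℝ) + (a1 k : ℝ))) /
              (((a1 k : ℝ) - 1) * ((a0 k : ℝ) - 1) * ((a0 k : ℝ) + (a1 k : ℝ) - 1))) :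
    (∃ δ : ℝ, 0 < δ ∧ ∀ l : ℝ, 0 < l → l < δ →
      loocvDev K a0 a1 l < loocvDev K a0 a1 0) ∧
    ¬ (∀ l : ℝ, 0 ≤ l → loocvDev K a0 a1 0 ≤ loocvDev K a0 a1 l) :=
  stmt7_general K a0 a1 A B hA hB hcover hsum
end

section
/- Let K = 2 with distinct indices k, l ∈ {1,2}. Assume min(a_{k0}, a_{k1}) = 0 with max(a_{k0}, a_{k1}) = a_{k•} > 1, and a_{l0} = a_{l1} > 1. If any of the following holds: (i) a_{k•} > 2, a_{l•} < a_{k•}(a_{k•} − 1) and a_{k•}(a_{l•}/2 − 1)(a_{l•} − 1) ≥ a_{l•}(a_{k•} − 1); (ii) a_{k•} > 2 and a_{l•} ≥ a_{k•}(a_{k•} − 1); (iii) a_{k•} = 2 and a_{l•} > 4; then the LOOCV deviance is minimized at λ = 0, i.e. D(0) ≤ D(λ) for all λ ≥ 0. -/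
open Real

noncomputable def loocvTerm (a0 a1 : ℕ) (lam : ℝ) : ℝ :=
  (a0 : ℝ) * log (1 - ((a1 : ℝ) + 2 * lam) / ((a0 : ℝ) + (a1 : ℝ) - 1 + 4 * lam)) +
    (a1 : ℝ) * log (((a1 : ℝ) - 1 + 2 * lam) / ((a0 : ℝ) + (a1 : ℝ) - 1 + 4 * lam))

theorem Fin.sum_univ_two_of_ne {M : Type*} [AddCommMonoid M] (f : Fin 2 → M) {k l : Fin 2}
    (h : k ≠ l) : ∑ i, f i = f k + f l := by
  fin_cases k <;> fin_cases l <;> simp_all [Fin.sum_univ_two, add_comm]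

theorem loocvDev_two_of_ne (a0 a1 : Fin 2 → ℕ) (lam : ℝ) {k l : Fin 2} (h : k ≠ l) :
    loocvDev 2 a0 a1 lam = -2 * (loocvTerm (a0 k) (a1 k) lam + loocvTerm (a0 l) (a1 l) lam) :=
  congrArg _ (Fin.sum_univ_two_of_ne (fun i => loocvTerm (a0 i) (a1 i) lam) h)

-- This holds also when `a + b = 0`: both sides are then `log 1 = log 0 = 0`.
theorem log_one_sub_div_add (a b : ℝ) : log (1 - b / (a + b)) = log (a / (a + b)) := by
  by_cases h : a + b = 0
  · simp [h]
  · rw [one_sub_div h, add_sub_cancel_right]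

theorem loocvTerm_eq (a0 a1 : ℕ) (lam : ℝ) :
    loocvTerm a0 a1 lam =
      a0 * log ((a0 - 1 + 2 * lam) / (a0 + a1 - 1 + 4 * lam)) +
        a1 * log ((a1 - 1 + 2 * lam) / (a0 + a1 - 1 + 4 * lam)) := by
  have hden : (a0 : ℝ) + a1 - 1 + 4 * lam = (a0 - 1 + 2 * lam) + (a1 + 2 * lam) := by ring
  rw [loocvTerm, hden, log_one_sub_div_add]

theorem loocvTerm_of_min_eq_zero {a0 a1 : ℕ} (h : min a0 a1 = 0) (lam : ℝ) :
    loocvTerm a0 a1 lam =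
      ((a0 + a1 : ℕ) : ℝ) *
        log (((a0 + a1 : ℕ) - 1 + 2 * lam) / ((a0 + a1 : ℕ) - 1 + 4 * lam)) := by
  rcases Nat.min_eq_zero_iff.mp h with rfl | rfl <;> simp [loocvTerm_eq]

theorem loocvTerm_self (a : ℕ) (lam : ℝ) :
    loocvTerm a a lam = 2 * a * log ((a - 1 + 2 * lam) / (2 * a - 1 + 4 * lam)) := by
  rw [loocvTerm_eq, show (a : ℝ) + a - 1 + 4 * lam = 2 * a - 1 + 4 * lam by ring]
  ring

section

variable {n m lam : ℝ}

theorem log_balanced_ratio_sub_le (hm : 1 < m) (hlam : 0 ≤ lam) :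
    log ((m - 1 + 2 * lam) / (2 * m - 1 + 4 * lam)) - log ((m - 1) / (2 * m - 1)) ≤
      2 * lam / ((m - 1) * (2 * m - 1 + 4 * lam)) := by
  have hm1 : 0 < m - 1 := by linarith
  have hden : 0 < 2 * m - 1 + 4 * lam := by linarith
  have hratio : 0 < (m - 1 + 2 * lam) / (2 * m - 1 + 4 * lam) := div_pos (by linarith) hden
  have hratio₀ : 0 < (m - 1) / (2 * m - 1) := div_pos hm1 (by linarith)
  rw [← log_div hratio.ne' hratio₀.ne']
  refine (log_le_sub_one_of_pos (div_pos hratio hratio₀)).trans_eq ?_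
  rw [div_div_div_eq, div_sub_one (mul_ne_zero hden.ne' hm1.ne'), mul_comm (2 * m - 1 + 4 * lam)]
  congr 1
  ring

theorem div_le_neg_log_separated_ratio (hn : 1 < n) (hlam : 0 ≤ lam) :
    2 * lam / (n - 1 + 3 * lam) ≤ -log ((n - 1 + 2 * lam) / (n - 1 + 4 * lam)) := by
  have hden : 0 < n - 1 + 2 * lam := by linarith
  have h := le_log_one_add_of_nonneg (div_nonneg (mul_nonneg zero_le_two hlam) hden.le)
  have hW : (n - 1 + 4 * lam) / (n - 1 + 2 * lam) = 1 + 2 * lam / (n - 1 + 2 * lam) := by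
    rw [one_add_div hden.ne']
    ring_nf
  have hbound : 2 * (2 * lam / (n - 1 + 2 * lam)) / (2 * lam / (n - 1 + 2 * lam) + 2) =
      2 * lam / (n - 1 + 3 * lam) := by
    rw [div_add' _ _ _ hden.ne', mul_div_assoc', div_div_div_cancel_right₀ hden.ne',
      div_eq_div_iff (by linarith) (by linarith)]
    ring
  rwa [← log_inv, inv_div, hW, ← hbound]

theorem mul_div_le_mul_div_of_criterion (hn : 1 < n) (hm : 1 < m) (hlam : 0 ≤ lam)
    (h₁ : 2 * m * (n - 1) ≤ n * (m - 1) * (2 * m - 1)) (h₂ : 3 * m ≤ 2 * n * (m - 1)) :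
    2 * m * (2 * lam / ((m - 1) * (2 * m - 1 + 4 * lam))) ≤ n * (2 * lam / (n - 1 + 3 * lam)) := by
  have hm1 : 0 < m - 1 := by linarith
  rw [mul_div_assoc', mul_div_assoc',
    div_le_div_iff₀ (mul_pos hm1 (by linarith)) (by linarith)]
  nlinarith [mul_nonneg hlam (sub_nonneg.2 h₁), mul_nonneg (mul_nonneg hlam hlam) (sub_nonneg.2 h₂)]

theorem three_mul_log_le_log (hlam : 0 ≤ lam) :
    3 * log (5 * (1 + lam) / (5 + 4 * lam)) ≤ log ((1 + 4 * lam) / (1 + 2 * lam)) := by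
  rw [show (3 : ℝ) = (3 : ℕ) by norm_num, ← log_pow]
  refine log_le_log (by positivity) ?_
  rw [div_pow, div_le_div_iff₀ (by positivity) (by positivity)]
  nlinarith [pow_nonneg hlam 2, pow_nonneg hlam 3, pow_nonneg hlam 4]

theorem balanced_gain_le_separated_loss (hn : 1 < n) (hm : 1 < m) (hlam : 0 ≤ lam)
    (h : (2 * m * (n - 1) ≤ n * (m - 1) * (2 * m - 1) ∧ 3 * m ≤ 2 * n * (m - 1)) ∨
      (n = 2 ∧ m = 3)) :
    2 * m * (log ((m - 1 + 2 * lam) / (2 * m - 1 + 4 * lam)) - log ((m - 1) / (2 * m - 1))) ≤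
      -(n * log ((n - 1 + 2 * lam) / (n - 1 + 4 * lam))) := by
  rcases h with ⟨h₁, h₂⟩ | ⟨rfl, rfl⟩
  · calc _ ≤ 2 * m * (2 * lam / ((m - 1) * (2 * m - 1 + 4 * lam))) :=
          mul_le_mul_of_nonneg_left (log_balanced_ratio_sub_le hm hlam) (by linarith)
      _ ≤ n * (2 * lam / (n - 1 + 3 * lam)) :=
          mul_div_le_mul_div_of_criterion hn hm hlam h₁ h₂
      _ ≤ n * -log ((n - 1 + 2 * lam) / (n - 1 + 4 * lam)) :=
          mul_le_mul_of_nonneg_left (div_le_neg_log_separated_ratio hn hlam) (by linarith)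
      _ = _ := by ring
  · have hgain : log ((3 - 1 + 2 * lam) / (2 * 3 - 1 + 4 * lam)) - log ((3 - 1) / (2 * 3 - 1)) =
        log (5 * (1 + lam) / (5 + 4 * lam)) := by
      rw [← log_div (by positivity) (by norm_num)]
      congr 1
      field_simp
      ring
    have hloss :
        -log ((2 - 1 + 2 * lam) / (2 - 1 + 4 * lam)) = log ((1 + 4 * lam) / (1 + 2 * lam)) := by
      rw [← log_inv, inv_div]
      norm_num
    rw [hgain, neg_mul_eq_mul_neg, hloss]
    linarith [three_mul_log_le_log hlam]

end

theorem criterion_of_conditions (n m : ℕ) (hn : 1 < n) (hm : 1 < m)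
    (h : (2 < n ∧ m + m < n * (n - 1) ∧
        ((m : ℝ) + m) * ((n : ℝ) - 1) ≤ n * (((m : ℝ) + m) / 2 - 1) * (((m : ℝ) + m) - 1)) ∨
      (2 < n ∧ n * (n - 1) ≤ m + m) ∨ (n = 2 ∧ 4 < m + m)) :
    (2 * (m : ℝ) * (n - 1) ≤ n * (m - 1) * (2 * m - 1) ∧ 3 * (m : ℝ) ≤ 2 * n * (m - 1)) ∨
      ((n : ℝ) = 2 ∧ (m : ℝ) = 3) := by
  have hm2 : (2 : ℝ) ≤ m := by exact_mod_cast hm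
  rcases h with ⟨hn3, -, hreal⟩ | ⟨hn3, hbig⟩ | ⟨rfl, hm3⟩
  · have hn3' : (3 : ℝ) ≤ n := by exact_mod_cast hn3
    refine Or.inl ⟨by linarith, by nlinarith⟩
  · have hn3' : (3 : ℝ) ≤ n := by exact_mod_cast hn3
    have hm3 : (3 : ℝ) ≤ m := by
      have : 3 * 2 ≤ n * (n - 1) := Nat.mul_le_mul hn3 (by omega)
      exact_mod_cast (by omega : 3 ≤ m)
    refine Or.inl ⟨?_, by nlinarith⟩
    nlinarith [mul_nonneg (mul_nonneg (by linarith : (0 : ℝ) ≤ n) (by linarith : (0 : ℝ) ≤ m - 3))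
      (by linarith : (0 : ℝ) ≤ 2 * m + 1)]
  · rcases (by omega : m = 3 ∨ 4 ≤ m) with rfl | hm4
    · exact Or.inr ⟨by norm_num, by norm_num⟩
    · have hm4' : (4 : ℝ) ≤ m := by exact_mod_cast hm4
      refine Or.inl ⟨by push_cast; nlinarith, by push_cast; nlinarith⟩

/-- `K = 2`, category `k` separated (`min = 0`, `max = a_{k•} > 1`), category `l` balanced
(`a_{l0} = a_{l1} > 1`). Under condition (i), (ii) or (iii) the LOOCV deviance is
minimized at `λ = 0`. -/
theorem stmt8 (a0 a1 : Fin 2 → ℕ) (k l : Fin 2) (hkl : k ≠ l)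
    (hk : min (a0 k) (a1 k) = 0 ∧ max (a0 k) (a1 k) = a0 k + a1 k ∧ 1 < a0 k + a1 k)
    (hl : a0 l = a1 l ∧ 1 < a0 l)
    (hcond :
      (2 < a0 k + a1 k ∧ a0 l + a1 l < (a0 k + a1 k) * (a0 k + a1 k - 1) ∧
        ((a0 l : ℝ) + (a1 l : ℝ)) * (((a0 k : ℝ) + (a1 k : ℝ)) - 1) ≤
          ((a0 k : ℝ) + (a1 k : ℝ)) * (((a0 l : ℝ) + (a1 l : ℝ)) / 2 - 1) *
            (((a0 l : ℝ) + (a1 l : ℝ)) - 1)) ∨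
      (2 < a0 k + a1 k ∧ (a0 k + a1 k) * (a0 k + a1 k - 1) ≤ a0 l + a1 l) ∨
      (a0 k + a1 k = 2 ∧ 4 < a0 l + a1 l)) :
    ∀ lam : ℝ, 0 ≤ lam → loocvDev 2 a0 a1 0 ≤ loocvDev 2 a0 a1 lam := by
  intro lam hlam
  obtain ⟨hsep, -, hn⟩ := hk
  obtain ⟨hbal, hm⟩ := hl
  rw [← hbal] at hcond
  have hgain := balanced_gain_le_separated_loss (by exact_mod_cast hn) (by exact_mod_cast hm) hlam
    (criterion_of_conditions _ _ hn hm (by push_cast; exact hcond))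
  rw [loocvDev_two_of_ne a0 a1 _ hkl, loocvDev_two_of_ne a0 a1 _ hkl, ← hbal,
    loocvTerm_of_min_eq_zero hsep, loocvTerm_of_min_eq_zero hsep, loocvTerm_self, loocvTerm_self]
  simp only [mul_zero, add_zero, log_div_self, zero_add]
  linarith
end
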